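/- Let θ : ℂ[w₀,…,w₁₃] → ℂ[x₀,x₁,y₀,y₁,z₀,z₁] be the ℂ-algebra homomorphism determined by w₀ ↦ x₀²y₀²z₀², w₁ ↦ x₀²y₀²z₁², w₂ ↦ x₀²y₀y₁z₀z₁, w₃ ↦ x₀²y₁²z₀², w₄ ↦ x₀²y₁²z₁², w₅ ↦ x₀x₁y₀²z₀z₁, w₆ ↦ x₀x₁y₀y₁z₀², w₇ ↦ x₀x₁y₀y₁z₁², w₈ ↦ x₀x₁y₁²z₀z₁, w₉ ↦ x₁²y₀²z₀², w₁₀ ↦ x₁²y₀²z₁², w₁₁ ↦ x₁²y₀y₁z₀z₁, w₁₂ ↦ x₁²y₁²z₀², w₁₃ ↦ x₁²y₁²z₁². Then the kernel of θ is generated, as an ideal of ℂ[w₀,…,w₁₃], by its homogeneous elements of degree 2. -/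

import Mathlib

set_option maxHeartbeats 1000000

open MvPolynomial

/-- The ℂ-algebra homomorphism θ : ℂ[w₀,…,w₁₃] → ℂ[x₀,x₁,y₀,y₁,z₀,z₁]
(variables `X 0,X 1` = x₀,x₁; `X 2,X 3` = y₀,y₁; `X 4,X 5` = z₀,z₁) determined by
w₀ ↦ x₀²y₀²z₀², w₁ ↦ x₀²y₀²z₁², w₂ ↦ x₀²y₀y₁z₀z₁, w₃ ↦ x₀²y₁²z₀², w₄ ↦ x₀²y₁²z₁²,
w₅ ↦ x₀x₁y₀²z₀z₁, w₆ ↦ x₀x₁y₀y₁z₀², w₇ ↦ x₀x₁y₀y₁z₁², w₈ ↦ x₀x₁y₁²z₀z₁,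
w₉ ↦ x₁²y₀²z₀², w₁₀ ↦ x₁²y₀²z₁², w₁₁ ↦ x₁²y₀y₁z₀z₁, w₁₂ ↦ x₁²y₁²z₀², w₁₃ ↦ x₁²y₁²z₁². -/
noncomputable def theta : MvPolynomial (Fin 14) ℂ →ₐ[ℂ] MvPolynomial (Fin 6) ℂ :=
  aeval ![X 0 ^ 2 * X 2 ^ 2 * X 4 ^ 2, X 0 ^ 2 * X 2 ^ 2 * X 5 ^ 2,
    X 0 ^ 2 * X 2 * X 3 * X 4 * X 5, X 0 ^ 2 * X 3 ^ 2 * X 4 ^ 2,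
    X 0 ^ 2 * X 3 ^ 2 * X 5 ^ 2, X 0 * X 1 * X 2 ^ 2 * X 4 * X 5,
    X 0 * X 1 * X 2 * X 3 * X 4 ^ 2, X 0 * X 1 * X 2 * X 3 * X 5 ^ 2,
    X 0 * X 1 * X 3 ^ 2 * X 4 * X 5, X 1 ^ 2 * X 2 ^ 2 * X 4 ^ 2,
    X 1 ^ 2 * X 2 ^ 2 * X 5 ^ 2, X 1 ^ 2 * X 2 * X 3 * X 4 * X 5,
    X 1 ^ 2 * X 3 ^ 2 * X 4 ^ 2, X 1 ^ 2 * X 3 ^ 2 * X 5 ^ 2]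

def bfun : Fin 14 → Fin 6 → ℕ :=
  ![![2,0,2,0,2,0], ![2,0,2,0,0,2], ![2,0,1,1,1,1], ![2,0,0,2,2,0], ![2,0,0,2,0,2],
    ![1,1,2,0,1,1], ![1,1,1,1,2,0], ![1,1,1,1,0,2], ![1,1,0,2,1,1],
    ![0,2,2,0,2,0], ![0,2,2,0,0,2], ![0,2,1,1,1,1], ![0,2,0,2,2,0], ![0,2,0,2,0,2]]

noncomputable def B (i : Fin 14) : Fin 6 →₀ ℕ := Finsupp.onFinset Finset.univ (bfun i) (by simp)

lemma B_apply (i : Fin 14) (t : Fin 6) : B i t = bfun i t := rfl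

lemma tX0 : theta (X 0) = monomial (B 0) 1 := by
  rw [show theta (X 0) = (X 0 ^ 2 * X 2 ^ 2 * X 4 ^ 2 : MvPolynomial (Fin 6) ℂ) from aeval_X _ 0]
  simp only [X_pow_eq_monomial, MvPolynomial.X, monomial_mul, monomial_pow, one_mul, mul_one, one_pow]
  refine congrArg (fun d => (monomial d) (1:ℂ)) (Finsupp.ext fun t => ?_)
  fin_cases t <;> simp [Finsupp.single_apply, B_apply] <;> decide

lemma tX1 : theta (X 1) = monomial (B 1) 1 := by
  rw [show theta (X 1) = (X 0 ^ 2 * X 2 ^ 2 * X 5 ^ 2 : MvPolynomial (Fin 6) ℂ) from aeval_X _ 1]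
  simp only [X_pow_eq_monomial, MvPolynomial.X, monomial_mul, monomial_pow, one_mul, mul_one, one_pow]
  refine congrArg (fun d => (monomial d) (1:ℂ)) (Finsupp.ext fun t => ?_)
  fin_cases t <;> simp [Finsupp.single_apply, B_apply] <;> decide

lemma tX2 : theta (X 2) = monomial (B 2) 1 := by
  rw [show theta (X 2) = (X 0 ^ 2 * X 2 * X 3 * X 4 * X 5 : MvPolynomial (Fin 6) ℂ) from aeval_X _ 2]
  simp only [X_pow_eq_monomial, MvPolynomial.X, monomial_mul, monomial_pow, one_mul, mul_one, one_pow]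
  refine congrArg (fun d => (monomial d) (1:ℂ)) (Finsupp.ext fun t => ?_)
  fin_cases t <;> simp [Finsupp.single_apply, B_apply] <;> decide

lemma tX3 : theta (X 3) = monomial (B 3) 1 := by
  rw [show theta (X 3) = (X 0 ^ 2 * X 3 ^ 2 * X 4 ^ 2 : MvPolynomial (Fin 6) ℂ) from aeval_X _ 3]
  simp only [X_pow_eq_monomial, MvPolynomial.X, monomial_mul, monomial_pow, one_mul, mul_one, one_pow]
  refine congrArg (fun d => (monomial d) (1:ℂ)) (Finsupp.ext fun t => ?_)
  fin_cases t <;> simp [Finsupp.single_apply, B_apply] <;> decide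

lemma tX4 : theta (X 4) = monomial (B 4) 1 := by
  rw [show theta (X 4) = (X 0 ^ 2 * X 3 ^ 2 * X 5 ^ 2 : MvPolynomial (Fin 6) ℂ) from aeval_X _ 4]
  simp only [X_pow_eq_monomial, MvPolynomial.X, monomial_mul, monomial_pow, one_mul, mul_one, one_pow]
  refine congrArg (fun d => (monomial d) (1:ℂ)) (Finsupp.ext fun t => ?_)
  fin_cases t <;> simp [Finsupp.single_apply, B_apply] <;> decide

lemma tX5 : theta (X 5) = monomial (B 5) 1 := by
  rw [show theta (X 5) = (X 0 * X 1 * X 2 ^ 2 * X 4 * X 5 : MvPolynomial (Fin 6) ℂ) from aeval_X _ 5]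
  simp only [X_pow_eq_monomial, MvPolynomial.X, monomial_mul, monomial_pow, one_mul, mul_one, one_pow]
  refine congrArg (fun d => (monomial d) (1:ℂ)) (Finsupp.ext fun t => ?_)
  fin_cases t <;> simp [Finsupp.single_apply, B_apply] <;> decide

lemma tX6 : theta (X 6) = monomial (B 6) 1 := by
  rw [show theta (X 6) = (X 0 * X 1 * X 2 * X 3 * X 4 ^ 2 : MvPolynomial (Fin 6) ℂ) from aeval_X _ 6]
  simp only [X_pow_eq_monomial, MvPolynomial.X, monomial_mul, monomial_pow, one_mul, mul_one, one_pow]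
  refine congrArg (fun d => (monomial d) (1:ℂ)) (Finsupp.ext fun t => ?_)
  fin_cases t <;> simp [Finsupp.single_apply, B_apply] <;> decide

lemma tX7 : theta (X 7) = monomial (B 7) 1 := by
  rw [show theta (X 7) = (X 0 * X 1 * X 2 * X 3 * X 5 ^ 2 : MvPolynomial (Fin 6) ℂ) from aeval_X _ 7]
  simp only [X_pow_eq_monomial, MvPolynomial.X, monomial_mul, monomial_pow, one_mul, mul_one, one_pow]
  refine congrArg (fun d => (monomial d) (1:ℂ)) (Finsupp.ext fun t => ?_)
  fin_cases t <;> simp [Finsupp.single_apply, B_apply] <;> decide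

lemma tX8 : theta (X 8) = monomial (B 8) 1 := by
  rw [show theta (X 8) = (X 0 * X 1 * X 3 ^ 2 * X 4 * X 5 : MvPolynomial (Fin 6) ℂ) from aeval_X _ 8]
  simp only [X_pow_eq_monomial, MvPolynomial.X, monomial_mul, monomial_pow, one_mul, mul_one, one_pow]
  refine congrArg (fun d => (monomial d) (1:ℂ)) (Finsupp.ext fun t => ?_)
  fin_cases t <;> simp [Finsupp.single_apply, B_apply] <;> decide

lemma tX9 : theta (X 9) = monomial (B 9) 1 := by
  rw [show theta (X 9) = (X 1 ^ 2 * X 2 ^ 2 * X 4 ^ 2 : MvPolynomial (Fin 6) ℂ) from aeval_X _ 9]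
  simp only [X_pow_eq_monomial, MvPolynomial.X, monomial_mul, monomial_pow, one_mul, mul_one, one_pow]
  refine congrArg (fun d => (monomial d) (1:ℂ)) (Finsupp.ext fun t => ?_)
  fin_cases t <;> simp [Finsupp.single_apply, B_apply] <;> decide

lemma tX10 : theta (X 10) = monomial (B 10) 1 := by
  rw [show theta (X 10) = (X 1 ^ 2 * X 2 ^ 2 * X 5 ^ 2 : MvPolynomial (Fin 6) ℂ) from aeval_X _ 10]
  simp only [X_pow_eq_monomial, MvPolynomial.X, monomial_mul, monomial_pow, one_mul, mul_one, one_pow]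
  refine congrArg (fun d => (monomial d) (1:ℂ)) (Finsupp.ext fun t => ?_)
  fin_cases t <;> simp [Finsupp.single_apply, B_apply] <;> decide

lemma tX11 : theta (X 11) = monomial (B 11) 1 := by
  rw [show theta (X 11) = (X 1 ^ 2 * X 2 * X 3 * X 4 * X 5 : MvPolynomial (Fin 6) ℂ) from aeval_X _ 11]
  simp only [X_pow_eq_monomial, MvPolynomial.X, monomial_mul, monomial_pow, one_mul, mul_one, one_pow]
  refine congrArg (fun d => (monomial d) (1:ℂ)) (Finsupp.ext fun t => ?_)
  fin_cases t <;> simp [Finsupp.single_apply, B_apply] <;> decide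

lemma tX12 : theta (X 12) = monomial (B 12) 1 := by
  rw [show theta (X 12) = (X 1 ^ 2 * X 3 ^ 2 * X 4 ^ 2 : MvPolynomial (Fin 6) ℂ) from aeval_X _ 12]
  simp only [X_pow_eq_monomial, MvPolynomial.X, monomial_mul, monomial_pow, one_mul, mul_one, one_pow]
  refine congrArg (fun d => (monomial d) (1:ℂ)) (Finsupp.ext fun t => ?_)
  fin_cases t <;> simp [Finsupp.single_apply, B_apply] <;> decide

lemma tX13 : theta (X 13) = monomial (B 13) 1 := by
  rw [show theta (X 13) = (X 1 ^ 2 * X 3 ^ 2 * X 5 ^ 2 : MvPolynomial (Fin 6) ℂ) from aeval_X _ 13]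
  simp only [X_pow_eq_monomial, MvPolynomial.X, monomial_mul, monomial_pow, one_mul, mul_one, one_pow]
  refine congrArg (fun d => (monomial d) (1:ℂ)) (Finsupp.ext fun t => ?_)
  fin_cases t <;> simp [Finsupp.single_apply, B_apply] <;> decide

lemma theta_X (i : Fin 14) : theta (X i) = monomial (B i) 1 := by
  fin_cases i
  · exact tX0
  · exact tX1
  · exact tX2
  · exact tX3
  · exact tX4
  · exact tX5
  · exact tX6
  · exact tX7
  · exact tX8
  · exact tX9
  · exact tX10
  · exact tX11
  · exact tX12
  · exact tX13

def evec : Fin 14 → Fin 3 → ℕ :=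
  ![![0,0,0], ![0,0,2], ![0,1,1], ![0,2,0], ![0,2,2],
    ![1,0,1], ![1,1,0], ![1,1,2], ![1,2,1],
    ![2,0,0], ![2,0,2], ![2,1,1], ![2,2,0], ![2,2,2]]
def pt : Fin 8 → Fin 3 → ℕ :=
  ![![0,0,0], ![0,0,1], ![0,1,0], ![0,1,1], ![1,0,0], ![1,0,1], ![1,1,0], ![1,1,1]]
def wt (u : Fin 8) : ℕ := pt u 0 + pt u 1 + pt u 2
def par (u : Fin 8) : Bool := wt u % 2 = 1
def le8 (u v : Fin 8) : Prop := ∀ t, pt u t ≤ pt v t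
instance (u v : Fin 8) : Decidable (le8 u v) := by unfold le8; infer_instance
def mi (u v : Fin 8) : Fin 8 :=
  ⟨u.val &&& v.val, lt_of_le_of_lt (Nat.and_le_left) u.isLt⟩
def mx (u v : Fin 8) : Fin 8 := ⟨u.val ||| v.val, by
  have h1 : u.val < 2 ^ 3 := u.isLt
  have h2 : v.val < 2 ^ 3 := v.isLt
  exact Nat.or_lt_two_pow h1 h2⟩
lemma F3 : ∀ u v : Fin 8, ∀ t, pt (mi u v) t + pt (mx u v) t = pt u t + pt v t := by decide
lemma F4 : ∀ u v : Fin 8, (par (mi u v) = par u ∧ par (mx u v) = par v) ∨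
    (par (mi u v) = !(par u) ∧ par (mx u v) = !(par v)) := by decide
lemma F5 : ∀ u v : Fin 8, ¬ le8 u v → ¬ le8 v u →
    wt u * wt u + wt v * wt v < wt (mi u v) * wt (mi u v) + wt (mx u v) * wt (mx u v) := by decide
lemma F7 : ∀ u v : Fin 8, par u = par v → ∃ i : Fin 14, ∀ t, evec i t = pt u t + pt v t := by decide
lemma F8 : ∀ i : Fin 14, ∃ u v : Fin 8, par u = par v ∧ ∀ t, evec i t = pt u t + pt v t := by decide
lemma F9 : ∀ i j : Fin 14, (∀ t, evec i t = evec j t) → i = j := by decide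
lemma F10 : ∀ u v : Fin 8, (le8 u v ∨ le8 v u) → wt v ≤ wt u → le8 v u := by decide
lemma F11 : ∀ u v : Fin 8, (∀ t, pt u t = pt v t) → u = v := by decide
lemma F12 : ∀ u : Fin 8, wt u * wt u ≤ 9 := by decide
lemma le8_trans : ∀ u v w : Fin 8, le8 u v → le8 v w → le8 u w := by decide

def eo : Fin 6 → Fin 3 := ![0,0,1,1,2,2]

lemma bfun_eo : ∀ (i : Fin 14) (s : Fin 6),
    (s.val % 2 = 0 → bfun i s = 2 - evec i (eo s)) ∧
    (s.val % 2 = 1 → bfun i s = evec i (eo s)) := by decide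

lemma elt2 : ∀ (i : Fin 14) (t : Fin 3), evec i t ≤ 2 := by decide

lemma B_of_evec : ∀ i j k l : Fin 14,
    (∀ t, evec i t + evec j t = evec k t + evec l t) → B i + B j = B k + B l := by
  intro i j k l h
  refine Finsupp.ext fun s => ?_
  rw [Finsupp.add_apply, Finsupp.add_apply, B_apply, B_apply, B_apply, B_apply]
  by_cases hp : s.val % 2 = 0
  · rw [(bfun_eo i s).1 hp, (bfun_eo j s).1 hp, (bfun_eo k s).1 hp, (bfun_eo l s).1 hp]
    have h1 := h (eo s)
    have b1 := elt2 i (eo s); have b2 := elt2 j (eo s)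
    have b3 := elt2 k (eo s); have b4 := elt2 l (eo s)
    omega
  · have hp' : s.val % 2 = 1 := by omega
    rw [(bfun_eo i s).2 hp', (bfun_eo j s).2 hp', (bfun_eo k s).2 hp', (bfun_eo l s).2 hp']
    exact h (eo s)

def MRel (T T' : Multiset (Fin 14)) : Prop :=
  ∃ i j k l rest, T = i ::ₘ j ::ₘ rest ∧ T' = k ::ₘ l ::ₘ rest ∧ B i + B j = B k + B l

lemma MRel.symm' {T T'} (h : MRel T T') : MRel T' T := by
  obtain ⟨i, j, k, l, rest, h1, h2, h3⟩ := h
  exact ⟨k, l, i, j, rest, h2, h1, h3.symm⟩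

lemma mrel_of_evec {i j k l : Fin 14} (rest : Multiset (Fin 14))
    (h : ∀ t, evec i t + evec j t = evec k t + evec l t) :
    MRel (i ::ₘ j ::ₘ rest) (k ::ₘ l ::ₘ rest) :=
  ⟨i, j, k, l, rest, rfl, rfl, B_of_evec _ _ _ _ h⟩

lemma mrel_cons {T T'} (a : Fin 14) (h : MRel T T') : MRel (a ::ₘ T) (a ::ₘ T') := by
  obtain ⟨i, j, k, l, rest, h1, h2, h3⟩ := h
  refine ⟨i, j, k, l, a ::ₘ rest, ?_, ?_, h3⟩
  · rw [h1]; rw [Multiset.cons_swap a i, Multiset.cons_swap a j]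
  · rw [h2]; rw [Multiset.cons_swap a k, Multiset.cons_swap a l]

lemma rtg_symm {T T'} (h : Relation.ReflTransGen MRel T T') :
    Relation.ReflTransGen MRel T' T := by
  induction h with
  | refl => exact .refl
  | tail _ hstep ih => exact Relation.ReflTransGen.trans (.single hstep.symm') ih

lemma rtg_cons {T T'} (a : Fin 14) (h : Relation.ReflTransGen MRel T T') :
    Relation.ReflTransGen MRel (a ::ₘ T) (a ::ₘ T') := by
  induction h with
  | refl => exact .refl
  | tail _ hstep ih => exact ih.tail (mrel_cons a hstep)

abbrev PairM := Multiset (Fin 8 × Fin 8)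
def qvalid (q : Fin 8 × Fin 8) : Prop := par q.1 = par q.2
instance (q : Fin 8 × Fin 8) : Decidable (qvalid q) := by unfold qvalid; infer_instance
def pvalid (P : PairM) : Prop := ∀ q ∈ P, qvalid q

noncomputable def projq (q : Fin 8 × Fin 8) : Fin 14 :=
  if h : qvalid q then (F7 q.1 q.2 h).choose else 0

lemma projq_spec {q} (h : qvalid q) : ∀ t, evec (projq q) t = pt q.1 t + pt q.2 t := by
  rw [projq, dif_pos h]; exact (F7 q.1 q.2 h).choose_spec

lemma projq_eq {q} (h : qvalid q) {i : Fin 14}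
    (hi : ∀ t, evec i t = pt q.1 t + pt q.2 t) : projq q = i :=
  F9 _ _ (fun t => by rw [projq_spec h t, hi t])

noncomputable def MP (P : PairM) : Multiset (Fin 14) := P.map projq
def UP (P : PairM) : Multiset (Fin 8) := P.map Prod.fst + P.map Prod.snd
def ptsum (V : Multiset (Fin 8)) (t : Fin 3) : ℕ := (V.map fun u => pt u t).sum
def phiV (V : Multiset (Fin 8)) : ℕ := (V.map fun u => wt u * wt u).sum
def esum (T : Multiset (Fin 14)) (t : Fin 3) : ℕ := (T.map fun i => evec i t).sum
def sortedU (V : Multiset (Fin 8)) : Prop := ∀ u ∈ V, ∀ v ∈ V, le8 u v ∨ le8 v u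

lemma MP_cons (q) (P : PairM) : MP (q ::ₘ P) = projq q ::ₘ MP P := by simp [MP]
lemma UP_cons (q) (P : PairM) : UP (q ::ₘ P) = q.1 ::ₘ q.2 ::ₘ UP P := by
  simp only [UP, Multiset.map_cons, Multiset.cons_add, Multiset.add_cons]
  rw [Multiset.cons_swap]
lemma UP_zero : UP 0 = 0 := rfl
lemma ptsum_cons (u) (V) (t) : ptsum (u ::ₘ V) t = pt u t + ptsum V t := by simp [ptsum]
lemma phiV_cons (u) (V) : phiV (u ::ₘ V) = wt u * wt u + phiV V := by simp [phiV]
lemma esum_cons (i) (T) (t) : esum (i ::ₘ T) t = evec i t + esum T t := by simp [esum]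
lemma card_UP (P : PairM) : Multiset.card (UP P) = 2 * Multiset.card P := by
  simp [UP]; ring

lemma pvalid_cons {q} {P : PairM} : pvalid (q ::ₘ P) ↔ qvalid q ∧ pvalid P := by
  constructor
  · intro h; exact ⟨h q (Multiset.mem_cons_self _ _), fun r hr => h r (Multiset.mem_cons_of_mem hr)⟩
  · rintro ⟨h1, h2⟩ r hr
    rcases Multiset.mem_cons.mp hr with h | h
    · rw [h]; exact h1
    · exact h2 r h

lemma ptsum_UP {P : PairM} (h : pvalid P) (t : Fin 3) : ptsum (UP P) t = esum (MP P) t := by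
  induction P using Multiset.induction with
  | empty => rfl
  | cons q P ih =>
      rw [pvalid_cons] at h
      rw [UP_cons, MP_cons, ptsum_cons, ptsum_cons, esum_cons, projq_spec h.1, ih h.2]
      ring

lemma phiV_le (V : Multiset (Fin 8)) : phiV V ≤ 9 * Multiset.card V := by
  induction V using Multiset.induction with
  | empty => simp [phiV]
  | cons u V ih =>
      rw [phiV_cons]
      simp only [Multiset.card_cons]
      have := F12 u
      omega

lemma le8_refl (u : Fin 8) : le8 u u := fun t => le_refl _

lemma bool_ne {p q : Bool} (h : ¬ p = q) : !p = q := by revert h; cases p <;> cases q <;> decide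

lemma projq_swap {u v : Fin 8} (h : qvalid (u,v)) : projq (v,u) = projq (u,v) := by
  have hsw : qvalid (v,u) := by unfold qvalid at h ⊢; exact h.symm
  exact projq_eq hsw (fun t => by rw [projq_spec h t]; ring)

lemma mem_UP_decomp {x : Fin 8} {P : PairM} (hv : pvalid P) (hx : x ∈ UP P) :
    ∃ y P₂, pvalid ((x,y) ::ₘ P₂) ∧ MP P = MP ((x,y) ::ₘ P₂) ∧
      UP P = UP ((x,y) ::ₘ P₂) ∧ Multiset.card P = Multiset.card P₂ + 1 := by
  rcases Multiset.mem_add.mp hx with hx1 | hx1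
  · obtain ⟨q, hq, hqx⟩ := Multiset.mem_map.mp hx1
    obtain ⟨P₂, hP₂⟩ := Multiset.exists_cons_of_mem hq
    refine ⟨q.2, P₂, ?_, ?_, ?_, ?_⟩
    · rw [← hqx, Prod.mk.eta, ← hP₂]; exact hv
    · rw [hP₂, ← hqx, Prod.mk.eta]
    · rw [hP₂, ← hqx, Prod.mk.eta]
    · rw [hP₂]; simp
  · obtain ⟨q, hq, hqx⟩ := Multiset.mem_map.mp hx1
    obtain ⟨P₂, hP₂⟩ := Multiset.exists_cons_of_mem hq
    have hqv : qvalid q := hv q hq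
    have hq' : q = (q.1, x) := by rw [← hqx]
    have hqv' : qvalid (q.1, x) := by rw [← hq']; exact hqv
    refine ⟨q.1, P₂, ?_, ?_, ?_, ?_⟩
    · rw [pvalid_cons]
      refine ⟨?_, fun r hr => hv r (by rw [hP₂]; exact Multiset.mem_cons_of_mem hr)⟩
      unfold qvalid at hqv' ⊢; exact hqv'.symm
    · rw [hP₂, MP_cons, MP_cons, hq', projq_swap hqv']
    · rw [hP₂, UP_cons, UP_cons, hq']
      exact Multiset.cons_swap _ _ _
    · rw [hP₂]; simp

lemma cross_step {u u₂ v v₂ a b c d : Fin 8} (P₂ : PairM)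
    (hq1 : qvalid (u,u₂)) (hq2 : qvalid (v,v₂)) (ha : qvalid (a,b)) (hc : qvalid (c,d))
    (hsum : ∀ t, pt a t + pt b t + (pt c t + pt d t)
      = pt u t + pt u₂ t + (pt v t + pt v₂ t)) :
    MRel (MP ((u,u₂) ::ₘ (v,v₂) ::ₘ P₂)) (MP ((a,b) ::ₘ (c,d) ::ₘ P₂)) := by
  rw [MP_cons, MP_cons, MP_cons, MP_cons]
  refine mrel_of_evec (MP P₂) (fun t => ?_)
  rw [projq_spec hq1, projq_spec hq2, projq_spec ha, projq_spec hc]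
  dsimp only
  have := hsum t; omega

lemma sort_step {P : PairM} (hval : pvalid P) {u v : Fin 8} (hu : u ∈ UP P)
    (hv : v ∈ UP P) (h1 : ¬ le8 u v) (h2 : ¬ le8 v u) :
    ∃ P', pvalid P' ∧ Relation.ReflTransGen MRel (MP P) (MP P') ∧
      Multiset.card P' = Multiset.card P ∧
      (∀ t, ptsum (UP P') t = ptsum (UP P) t) ∧
      phiV (UP P) < phiV (UP P') := by
  have hne : v ≠ u := fun h => h1 (h ▸ le8_refl u)
  obtain ⟨u₂, P₁, hval1, hMP1, hUP1, hcard1⟩ := mem_UP_decomp hval hu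
  have hq1 : qvalid (u, u₂) := (pvalid_cons.mp hval1).1
  have hval1' : pvalid P₁ := (pvalid_cons.mp hval1).2
  have hvQ : v ∈ UP ((u,u₂) ::ₘ P₁) := by rw [← hUP1]; exact hv
  rw [UP_cons] at hvQ
  dsimp only at hvQ
  rcases Multiset.mem_cons.mp hvQ with hvu | hvQ
  · exact absurd hvu hne
  rcases Multiset.mem_cons.mp hvQ with hvu2 | hvP1
  · -- v = u₂ : same pair
    have hq1' : qvalid (u, v) := by rw [hvu2]; exact hq1
    have hqv : qvalid (mi u v, mx u v) := by
      unfold qvalid at hq1' ⊢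
      dsimp only at hq1' ⊢
      rcases F4 u v with ⟨ha, hb⟩ | ⟨ha, hb⟩ <;> rw [ha, hb, hq1']
    have hUP1' : UP P = u ::ₘ v ::ₘ UP P₁ := by
      rw [hUP1, UP_cons]; dsimp only; rw [hvu2]
    have hMP1' : MP P = projq (u, v) ::ₘ MP P₁ := by
      rw [hMP1, MP_cons]
      congr 1
      congr 1
      rw [hvu2]
    refine ⟨(mi u v, mx u v) ::ₘ P₁, pvalid_cons.mpr ⟨hqv, hval1'⟩, ?_, ?_, ?_, ?_⟩
    · rw [hMP1', MP_cons]
      rw [show projq (mi u v, mx u v) = projq (u, v) from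
        projq_eq hqv (fun t => by
          rw [projq_spec hq1' t]; dsimp only; have := F3 u v t; omega)]
    · rw [hcard1]; simp
    · intro t
      rw [hUP1', UP_cons, ptsum_cons, ptsum_cons, ptsum_cons, ptsum_cons]
      dsimp only
      have := F3 u v t; omega
    · rw [hUP1', UP_cons, phiV_cons, phiV_cons, phiV_cons, phiV_cons]
      dsimp only
      have h5 := F5 u v h1 h2; omega
  · -- v in the rest
    obtain ⟨v₂, P₂, hval2, hMP2, hUP2, hcard2⟩ := mem_UP_decomp hval1' hvP1
    have hq2 : qvalid (v, v₂) := (pvalid_cons.mp hval2).1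
    have hval2' : pvalid P₂ := (pvalid_cons.mp hval2).2
    have hUPP : UP P = u ::ₘ u₂ ::ₘ v ::ₘ v₂ ::ₘ UP P₂ := by
      rw [hUP1, UP_cons (u,u₂) P₁, hUP2, UP_cons]
    have hsum4 : ∀ t, pt (mi u v) t + pt (mx u v) t = pt u t + pt v t := fun t => F3 u v t
    have hphi : wt u * wt u + wt v * wt v
        < wt (mi u v) * wt (mi u v) + wt (mx u v) * wt (mx u v) := F5 u v h1 h2
    have key : ∀ a b c d : Fin 8, qvalid (a,b) → qvalid (c,d) →
        (∀ t, pt a t + pt b t + (pt c t + pt d t)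
          = pt (mi u v) t + pt u₂ t + (pt (mx u v) t + pt v₂ t)) →
        (wt a * wt a + wt b * wt b + (wt c * wt c + wt d * wt d)
          = wt (mi u v) * wt (mi u v) + wt u₂ * wt u₂
            + (wt (mx u v) * wt (mx u v) + wt v₂ * wt v₂)) →
        ∃ P', pvalid P' ∧ Relation.ReflTransGen MRel (MP P) (MP P') ∧
          Multiset.card P' = Multiset.card P ∧
          (∀ t, ptsum (UP P') t = ptsum (UP P) t) ∧
          phiV (UP P) < phiV (UP P') := by
      intro a b c d hab hcd hsum hwt
      refine ⟨(a,b) ::ₘ (c,d) ::ₘ P₂, ?_, ?_, ?_, ?_, ?_⟩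
      · exact pvalid_cons.mpr ⟨hab, pvalid_cons.mpr ⟨hcd, hval2'⟩⟩
      · rw [hMP1, MP_cons, hMP2]
        refine Relation.ReflTransGen.single ?_
        rw [← MP_cons]
        refine cross_step P₂ hq1 hq2 hab hcd (fun t => ?_)
        have h3 := hsum4 t; have h4 := hsum t; omega
      · rw [hcard1, hcard2]; simp
      · intro t
        rw [hUPP, UP_cons (a,b), UP_cons (c,d)]
        rw [ptsum_cons, ptsum_cons, ptsum_cons, ptsum_cons,
          ptsum_cons, ptsum_cons, ptsum_cons, ptsum_cons]
        dsimp only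
        have h3 := hsum4 t; have h4 := hsum t; omega
      · rw [hUPP, UP_cons (a,b), UP_cons (c,d)]
        rw [phiV_cons, phiV_cons, phiV_cons, phiV_cons,
          phiV_cons, phiV_cons, phiV_cons, phiV_cons]
        dsimp only
        omega
    unfold qvalid at hq1 hq2
    dsimp only at hq1 hq2
    by_cases hpm : par (mi u v) = par u
    · have hpx : par (mx u v) = par v := by
        rcases F4 u v with ⟨ha, hb⟩ | ⟨ha, hb⟩
        · exact hb
        · rw [hpm] at ha; exact absurd ha.symm (by cases par u <;> decide)
      refine key (mi u v) u₂ (mx u v) v₂ ?_ ?_ (fun t => by omega) (by ring)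
      · unfold qvalid; dsimp only; rw [hpm]; exact hq1
      · unfold qvalid; dsimp only; rw [hpx]; exact hq2
    · have hflip : par (mi u v) = !(par u) ∧ par (mx u v) = !(par v) := by
        rcases F4 u v with ⟨ha, hb⟩ | h
        · exact absurd ha hpm
        · exact h
      by_cases hpar : par u = par v
      · refine key (mi u v) (mx u v) u₂ v₂ ?_ ?_ (fun t => by omega) (by ring)
        · unfold qvalid; dsimp only; rw [hflip.1, hflip.2, hpar]
        · unfold qvalid; dsimp only; rw [← hq1, ← hq2, hpar]
      · refine key (mi u v) v₂ (mx u v) u₂ ?_ ?_ (fun t => by omega) (by ring)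
        · unfold qvalid; dsimp only; rw [hflip.1, ← hq2]
          revert hpar; cases par u <;> cases par v <;> decide
        · unfold qvalid; dsimp only; rw [hflip.2, ← hq1]
          revert hpar; cases par u <;> cases par v <;> decide

lemma F13 : ∀ (u : Fin 8) (t : Fin 3), pt u t ≤ 1 := by decide

lemma sortP : ∀ n (P : PairM), pvalid P → 9 * Multiset.card (UP P) + 1 - phiV (UP P) ≤ n →
    ∃ P', pvalid P' ∧ Relation.ReflTransGen MRel (MP P) (MP P') ∧
      Multiset.card P' = Multiset.card P ∧ (∀ t, ptsum (UP P') t = ptsum (UP P) t) ∧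
      sortedU (UP P') := by
  intro n
  induction n with
  | zero =>
      intro P hval hm
      have := phiV_le (UP P)
      omega
  | succ n ih =>
      intro P hval hm
      by_cases hs : sortedU (UP P)
      · exact ⟨P, hval, .refl, rfl, fun t => rfl, hs⟩
      · have hex : ∃ u ∈ UP P, ∃ v ∈ UP P, ¬ le8 u v ∧ ¬ le8 v u := by
          unfold sortedU at hs; push_neg at hs; exact hs
        obtain ⟨u, hu, v, hv, hnc⟩ := hex
        obtain ⟨P₁, hval1, hrtg, hcard, hpt, hphi⟩ := sort_step hval hu hv hnc.1 hnc.2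
        have hcardU : Multiset.card (UP P₁) = Multiset.card (UP P) := by
          rw [card_UP, card_UP, hcard]
        have hm1 : 9 * Multiset.card (UP P₁) + 1 - phiV (UP P₁) ≤ n := by
          rw [hcardU]; omega
        obtain ⟨P', h1, h2, h3, h4, h5⟩ := ih P₁ hval1 hm1
        exact ⟨P', h1, hrtg.trans h2, by rw [h3, hcard], fun t => by rw [h4 t, hpt t], h5⟩

lemma top_exists : ∀ (V : Multiset (Fin 8)), sortedU V → V ≠ 0 →
    ∃ u ∈ V, ∀ w ∈ V, le8 w u := by
  intro V
  induction V using Multiset.induction with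
  | empty => intro _ h; exact absurd rfl h
  | cons a V ih =>
      intro hs _
      by_cases hV : V = 0
      · subst hV
        refine ⟨a, Multiset.mem_cons_self a 0, fun w hw => ?_⟩
        rcases Multiset.mem_cons.mp hw with h | h
        · rw [h]; exact le8_refl a
        · exact absurd h (by simp)
      · have hsV : sortedU V := fun x hx y hy =>
          hs x (Multiset.mem_cons_of_mem hx) y (Multiset.mem_cons_of_mem hy)
        obtain ⟨t, ht, htop⟩ := ih hsV hV
        rcases hs a (Multiset.mem_cons_self _ _) t (Multiset.mem_cons_of_mem ht) with h | h
        · refine ⟨t, Multiset.mem_cons_of_mem ht, fun w hw => ?_⟩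
          rcases Multiset.mem_cons.mp hw with hw | hw
          · rw [hw]; exact h
          · exact htop w hw
        · refine ⟨a, Multiset.mem_cons_self _ _, fun w hw => ?_⟩
          rcases Multiset.mem_cons.mp hw with hw | hw
          · rw [hw]; exact le8_refl a
          · exact le8_trans _ _ _ (htop w hw) h

lemma ptsum_eq_zero_iff (V : Multiset (Fin 8)) (t : Fin 3) :
    ptsum V t = 0 ↔ ∀ w ∈ V, pt w t = 0 := by
  unfold ptsum
  rw [Multiset.sum_eq_zero_iff]
  constructor
  · intro h w hw; exact h _ (Multiset.mem_map_of_mem _ hw)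
  · intro h x hx
    obtain ⟨w, hw, rfl⟩ := Multiset.mem_map.mp hx
    exact h w hw

lemma chain_unique : ∀ n (V V' : Multiset (Fin 8)), Multiset.card V ≤ n →
    sortedU V → sortedU V' → Multiset.card V = Multiset.card V' →
    (∀ t, ptsum V t = ptsum V' t) → V = V' := by
  intro n
  induction n with
  | zero =>
      intro V V' h1 _ _ hc _
      have hV : V = 0 := Multiset.card_eq_zero.mp (Nat.le_zero.mp h1)
      have hV' : V' = 0 := by rw [← Multiset.card_eq_zero, ← hc, hV]; rfl
      rw [hV, hV']
  | succ n ih =>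
      intro V V' hn hs hs' hc hpt
      by_cases hV : V = 0
      · have hV' : V' = 0 := by rw [← Multiset.card_eq_zero, ← hc, hV]; rfl
        rw [hV, hV']
      · have hV' : V' ≠ 0 := by
          intro h
          rw [h] at hc
          simp only [Multiset.card_zero] at hc
          exact hV (Multiset.card_eq_zero.mp hc)
        obtain ⟨u, hu, hutop⟩ := top_exists V hs hV
        obtain ⟨u', hu', hutop'⟩ := top_exists V' hs' hV'
        have hdet : ∀ (W : Multiset (Fin 8)) w, w ∈ W → (∀ x ∈ W, le8 x w) →
            ∀ t, pt w t = if ptsum W t = 0 then 0 else 1 := by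
          intro W w hw htop t
          by_cases h0 : ptsum W t = 0
          · rw [if_pos h0]; exact (ptsum_eq_zero_iff W t).mp h0 w hw
          · rw [if_neg h0]
            have h1 : pt w t ≤ 1 := F13 w t
            have h2 : pt w t ≠ 0 := by
              intro hz
              apply h0
              rw [ptsum_eq_zero_iff]
              intro x hx
              have := htop x hx t
              omega
            omega
        have huu : u = u' := F11 _ _ (fun t => by
          rw [hdet V u hu hutop t, hdet V' u' hu' hutop' t, hpt t])
        obtain ⟨V₂, hV₂⟩ := Multiset.exists_cons_of_mem hu
        obtain ⟨V₂', hV₂'⟩ := Multiset.exists_cons_of_mem hu'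
        rw [hV₂, hV₂', ← huu]
        congr 1
        apply ih
        · have : Multiset.card V = Multiset.card V₂ + 1 := by rw [hV₂]; simp
          omega
        · exact fun x hx y hy => hs x (by rw [hV₂]; exact Multiset.mem_cons_of_mem hx)
            y (by rw [hV₂]; exact Multiset.mem_cons_of_mem hy)
        · exact fun x hx y hy => hs' x (by rw [hV₂']; exact Multiset.mem_cons_of_mem hx)
            y (by rw [hV₂']; exact Multiset.mem_cons_of_mem hy)
        · have h1 : Multiset.card V = Multiset.card V₂ + 1 := by rw [hV₂]; simp
          have h2 : Multiset.card V' = Multiset.card V₂' + 1 := by rw [hV₂']; simp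
          omega
        · intro t
          have := hpt t
          rw [hV₂, hV₂', ptsum_cons, ptsum_cons, ← huu] at this
          omega

lemma exists_P : ∀ T : Multiset (Fin 14), ∃ P, pvalid P ∧ MP P = T := by
  intro T
  induction T using Multiset.induction with
  | empty => exact ⟨0, fun q h => absurd h (Multiset.notMem_zero q), rfl⟩
  | cons i T ih =>
      obtain ⟨P, hval, hMP⟩ := ih
      obtain ⟨u, v, hpar, hsum⟩ := F8 i
      have hq : qvalid (u, v) := hpar
      refine ⟨(u,v) ::ₘ P, pvalid_cons.mpr ⟨hq, hval⟩, ?_⟩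
      rw [MP_cons, hMP, projq_eq hq (fun t => hsum t)]

lemma match_conn : ∀ n (P P' : PairM), Multiset.card P ≤ n → pvalid P → pvalid P' →
    UP P = UP P' → Relation.ReflTransGen MRel (MP P) (MP P') := by
  intro n
  induction n with
  | zero =>
      intro P P' hc _ _ hUP
      have hP : P = 0 := Multiset.card_eq_zero.mp (Nat.le_zero.mp hc)
      subst hP
      have h0 : Multiset.card (UP P') = 0 := by rw [← hUP]; rfl
      rw [card_UP] at h0
      have : P' = 0 := Multiset.card_eq_zero.mp (by omega)
      rw [this]
  | succ n ih =>
      intro P P' hc hval hval' hUP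
      by_cases hP : P = 0
      · subst hP
        have h0 : Multiset.card (UP P') = 0 := by rw [← hUP]; rfl
        rw [card_UP] at h0
        have : P' = 0 := Multiset.card_eq_zero.mp (by omega)
        rw [this]
      · obtain ⟨q, hq⟩ := Multiset.exists_mem_of_ne_zero hP
        obtain ⟨P₂, hP₂⟩ := Multiset.exists_cons_of_mem hq
        have hq1 : qvalid q := hval q hq
        have hvalP₂ : pvalid P₂ := fun r hr => hval r (by
          rw [hP₂]; exact Multiset.mem_cons_of_mem hr)
        have hcardP₂ : Multiset.card P₂ ≤ n := by
          have : Multiset.card P = Multiset.card P₂ + 1 := by rw [hP₂]; simp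
          omega
        have hu : q.1 ∈ UP P' := by
          rw [← hUP, hP₂, UP_cons]
          exact Multiset.mem_cons_self _ _
        obtain ⟨y, P₃, hvalQ, hMPQ, hUPQ, hcardQ⟩ := mem_UP_decomp hval' hu
        have hQv : qvalid (q.1, y) := (pvalid_cons.mp hvalQ).1
        have hvalP₃ : pvalid P₃ := (pvalid_cons.mp hvalQ).2
        have hUPeq : q.1 ::ₘ q.2 ::ₘ UP P₂ = q.1 ::ₘ y ::ₘ UP P₃ := by
          have h := hUP
          rw [hP₂, UP_cons] at h
          rw [hUPQ, UP_cons] at h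
          exact h
        by_cases hy : y = q.2
        · subst hy
          have hUP23 : UP P₂ = UP P₃ :=
            (Multiset.cons_inj_right _).mp ((Multiset.cons_inj_right _).mp hUPeq)
          have hrec := ih P₂ P₃ hcardP₂ hvalP₂ hvalP₃ hUP23
          rw [hP₂, MP_cons, hMPQ, MP_cons]
          rw [show projq (q.1, q.2) = projq q from by rw [Prod.mk.eta]]
          exact rtg_cons _ hrec
        · have hq2mem : q.2 ∈ UP P₃ := by
            have h1 : q.2 ::ₘ UP P₂ = y ::ₘ UP P₃ := (Multiset.cons_inj_right _).mp hUPeq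
            have hmem : q.2 ∈ y ::ₘ UP P₃ := by
              rw [← h1]; exact Multiset.mem_cons_self _ _
            rcases Multiset.mem_cons.mp hmem with h | h
            · exact absurd h (fun hh => hy hh.symm)
            · exact h
          obtain ⟨z, P₄, hval4, hMP4, hUP4, hcard4⟩ := mem_UP_decomp hvalP₃ hq2mem
          have hq3 : qvalid (q.2, z) := (pvalid_cons.mp hval4).1
          have hvalP₄ : pvalid P₄ := (pvalid_cons.mp hval4).2
          have hqq : qvalid (q.1, q.2) := by rw [Prod.mk.eta]; exact hq1
          have hyz : qvalid (y, z) := show par y = par z by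
            have a1 : par q.1 = par q.2 := hqq
            have a2 : par q.1 = par y := hQv
            have a3 : par q.2 = par z := hq3
            rw [← a2, a1, a3]
          have hregroup : MRel (MP ((q.1,y) ::ₘ (q.2,z) ::ₘ P₄))
              (MP ((q.1,q.2) ::ₘ (y,z) ::ₘ P₄)) :=
            cross_step P₄ hQv hq3 hqq hyz (fun t => by omega)
          have hUP5 : UP P₂ = UP ((y,z) ::ₘ P₄) := by
            have h1 : q.2 ::ₘ UP P₂ = y ::ₘ UP P₃ := (Multiset.cons_inj_right _).mp hUPeq
            rw [hUP4, UP_cons] at h1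
            rw [UP_cons]
            have h2 : y ::ₘ q.2 ::ₘ z ::ₘ UP P₄ = q.2 ::ₘ y ::ₘ z ::ₘ UP P₄ :=
              Multiset.cons_swap _ _ _
            rw [h2] at h1
            exact (Multiset.cons_inj_right _).mp h1
          have hvalyz : pvalid ((y,z) ::ₘ P₄) := pvalid_cons.mpr ⟨hyz, hvalP₄⟩
          have hrec := ih P₂ ((y,z) ::ₘ P₄) hcardP₂ hvalP₂ hvalyz hUP5
          have step1 : Relation.ReflTransGen MRel (MP P)
              (MP ((q.1,q.2) ::ₘ (y,z) ::ₘ P₄)) := by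
            rw [hP₂, MP_cons, MP_cons (q.1,q.2)]
            rw [show projq (q.1, q.2) = projq q from by rw [Prod.mk.eta]]
            exact rtg_cons _ hrec
          have step2 : Relation.ReflTransGen MRel
              (MP ((q.1,q.2) ::ₘ (y,z) ::ₘ P₄)) (MP P') := by
            refine Relation.ReflTransGen.head hregroup.symm' ?_
            rw [MP_cons (q.1,y) ((q.2,z) ::ₘ P₄), MP_cons (q.2,z) P₄, hMPQ,
              MP_cons (q.1,y) P₃, hMP4, MP_cons (q.2,z) P₄]
          exact step1.trans step2

lemma card_MP (P : PairM) : Multiset.card (MP P) = Multiset.card P := by simp [MP]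

lemma conn_comb (T T' : Multiset (Fin 14)) (hc : Multiset.card T = Multiset.card T')
    (he : ∀ t, esum T t = esum T' t) : Relation.ReflTransGen MRel T T' := by
  obtain ⟨P, hvalP, hMP⟩ := exists_P T
  obtain ⟨P', hvalP', hMP'⟩ := exists_P T'
  obtain ⟨Q, hvQ, hr1, hc1, hp1, hs1⟩ := sortP _ P hvalP le_rfl
  obtain ⟨Q', hvQ', hr1', hc1', hp1', hs1'⟩ := sortP _ P' hvalP' le_rfl
  have hcardP : Multiset.card P = Multiset.card T := by rw [← hMP, card_MP]
  have hcardP' : Multiset.card P' = Multiset.card T' := by rw [← hMP', card_MP]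
  have hUPeq : UP Q = UP Q' := by
    apply chain_unique (Multiset.card (UP Q)) _ _ le_rfl hs1 hs1'
    · rw [card_UP, card_UP, hc1, hc1', hcardP, hcardP', hc]
    · intro t
      rw [hp1 t, hp1' t, ptsum_UP hvalP t, ptsum_UP hvalP' t, hMP, hMP']
      exact he t
  have hmatch := match_conn (Multiset.card Q) Q Q' le_rfl hvQ hvQ' hUPeq
  rw [← hMP, ← hMP']
  exact (hr1.trans hmatch).trans (rtg_symm hr1')

noncomputable section

abbrev Rp := MvPolynomial (Fin 14) ℂ

def Igen : Set Rp := {f | f ∈ RingHom.ker theta ∧ f.IsHomogeneous 2}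

def Isp : Ideal Rp := Ideal.span Igen

def AM (T : Multiset (Fin 14)) : Fin 6 →₀ ℕ := (T.map B).sum

lemma AM_cons (i : Fin 14) (T : Multiset (Fin 14)) : AM (i ::ₘ T) = B i + AM T := by
  simp [AM]

lemma mon_toFinsupp_cons (i : Fin 14) (T : Multiset (Fin 14)) :
    monomial (Multiset.toFinsupp (i ::ₘ T)) (1:ℂ) =
      X i * monomial (Multiset.toFinsupp T) 1 := by
  rw [← Multiset.singleton_add, Multiset.toFinsupp_add, Multiset.toFinsupp_singleton]
  rw [show (X i : Rp) = monomial (Finsupp.single i 1) 1 from rfl, monomial_mul, one_mul]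

lemma theta_mon (T : Multiset (Fin 14)) :
    theta (monomial (Multiset.toFinsupp T) 1) = monomial (AM T) 1 := by
  induction T using Multiset.induction with
  | empty =>
      rw [Multiset.toFinsupp_zero]
      rw [show (monomial (0 : Fin 14 →₀ ℕ) (1:ℂ)) = 1 from by simp]
      rw [show AM 0 = 0 from by simp [AM], map_one]
      simp
  | cons i T ih =>
      rw [mon_toFinsupp_cons, map_mul, ih, theta_X, AM_cons, monomial_mul, one_mul]

lemma quad_mem {i j k l : Fin 14} (h : B i + B j = B k + B l) :
    (X i * X j - X k * X l : Rp) ∈ Isp := by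
  apply Ideal.subset_span
  constructor
  · rw [RingHom.mem_ker]
    rw [map_sub, map_mul, map_mul, theta_X, theta_X, theta_X, theta_X,
      monomial_mul, monomial_mul, h]
    ring
  · exact ((isHomogeneous_X ℂ i).mul (isHomogeneous_X ℂ j)).sub
      ((isHomogeneous_X ℂ k).mul (isHomogeneous_X ℂ l))

lemma rel_mem {T T' : Multiset (Fin 14)} (h : MRel T T') :
    monomial (Multiset.toFinsupp T) (1:ℂ) - monomial (Multiset.toFinsupp T') 1 ∈ Isp := by
  obtain ⟨i, j, k, l, rest, h1, h2, h3⟩ := h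
  rw [h1, h2, mon_toFinsupp_cons, mon_toFinsupp_cons, mon_toFinsupp_cons, mon_toFinsupp_cons]
  rw [show (X i * (X j * monomial (Multiset.toFinsupp rest) (1:ℂ)) -
      X k * (X l * monomial (Multiset.toFinsupp rest) 1)) =
      monomial (Multiset.toFinsupp rest) 1 * (X i * X j - X k * X l) from by ring]
  exact Ideal.mul_mem_left _ _ (quad_mem h3)

lemma rtg_mem {T T' : Multiset (Fin 14)} (h : Relation.ReflTransGen MRel T T') :
    monomial (Multiset.toFinsupp T) (1:ℂ) - monomial (Multiset.toFinsupp T') 1 ∈ Isp := by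
  induction h with
  | refl => simp
  | tail _ hstep ih =>
      rename_i T'' T''' _
      have := rel_mem hstep
      have h2 := Isp.add_mem ih this
      simpa using h2

lemma AM_apply (T : Multiset (Fin 14)) (s : Fin 6) :
    AM T s = (T.map fun i => bfun i s).sum := by
  unfold AM
  rw [show ((T.map B).sum) s = ((T.map B).map (fun g : Fin 6 →₀ ℕ => g s)).sum from
    AddMonoidHom.map_multiset_sum (Finsupp.applyAddHom s : (Fin 6 →₀ ℕ) →+ ℕ) _]
  rw [Multiset.map_map]
  rfl

lemma fact01 : ∀ i : Fin 14, bfun i 0 + bfun i 1 = 2 := by decide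

def od : Fin 3 → Fin 6 := ![1,3,5]

lemma fact_od : ∀ (i : Fin 14) (t : Fin 3), bfun i (od t) = evec i t := by decide

lemma two_card (T : Multiset (Fin 14)) :
    (T.map fun i => bfun i 0).sum + (T.map fun i => bfun i 1).sum
      = 2 * Multiset.card T := by
  rw [← Multiset.sum_map_add]
  rw [show (T.map fun i => bfun i 0 + bfun i 1) = T.map fun _ => 2 from
    Multiset.map_congr rfl (fun i _ => fact01 i)]
  rw [Multiset.map_const', Multiset.sum_replicate, smul_eq_mul, mul_comm]

lemma AM_card {T T' : Multiset (Fin 14)} (h : AM T = AM T') :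
    Multiset.card T = Multiset.card T' := by
  have h0 : AM T 0 = AM T' 0 := by rw [h]
  have h1 : AM T 1 = AM T' 1 := by rw [h]
  rw [AM_apply, AM_apply] at h0 h1
  have e1 := two_card T
  have e2 := two_card T'
  omega

lemma esum_AM (T : Multiset (Fin 14)) (t : Fin 3) : esum T t = AM T (od t) := by
  rw [AM_apply]
  unfold esum
  rw [show (T.map fun i => bfun i (od t)) = T.map fun i => evec i t from
    Multiset.map_congr rfl (fun i _ => fact_od i t)]

lemma conn : ∀ T T' : Multiset (Fin 14), AM T = AM T' → Relation.ReflTransGen MRel T T' := by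
  intro T T' h
  refine conn_comb T T' (AM_card h) (fun t => ?_)
  rw [esum_AM, esum_AM, h]

def Am (m : Fin 14 →₀ ℕ) : Fin 6 →₀ ℕ := AM (Finsupp.toMultiset m)

lemma theta_monomial (m : Fin 14 →₀ ℕ) (c : ℂ) :
    theta (monomial m c) = monomial (Am m) c := by
  have h : monomial m c = C c * monomial m 1 := by rw [C_mul_monomial, mul_one]
  rw [h, map_mul, show (theta (C c)) = C c from theta.commutes c]
  rw [show m = Multiset.toFinsupp (Finsupp.toMultiset m) from (Finsupp.toMultiset_toFinsupp m).symm]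
  rw [theta_mon]
  rw [C_mul_monomial, mul_one]
  rw [Finsupp.toMultiset_toFinsupp]
  rfl

lemma binomial_mem {m m' : Fin 14 →₀ ℕ} (h : Am m = Am m') :
    monomial m (1:ℂ) - monomial m' 1 ∈ Isp := by
  have := rtg_mem (conn _ _ h)
  rwa [Finsupp.toMultiset_toFinsupp, Finsupp.toMultiset_toFinsupp] at this

lemma ker_sub : ∀ n (f : Rp), f.support.card ≤ n → f ∈ RingHom.ker theta → f ∈ Isp := by
  intro n
  induction n with
  | zero =>
      intro f hcard _
      have : f.support = ∅ := Finset.card_eq_zero.mp (Nat.le_zero.mp hcard)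
      rw [support_eq_empty.mp this]; exact Isp.zero_mem
  | succ n ih =>
      intro f hcard hker
      by_cases hf : f = 0
      · rw [hf]; exact Isp.zero_mem
      · obtain ⟨m, hm⟩ := Finset.nonempty_of_ne_empty (fun h => hf (support_eq_empty.mp h))
        -- coefficient identity
        have hth : theta f = ∑ v ∈ f.support, monomial (Am v) (coeff v f) := by
          conv_lhs => rw [as_sum f]
          rw [map_sum]
          exact Finset.sum_congr rfl fun v _ => theta_monomial v (coeff v f)
        have hco : ∑ v ∈ f.support, (if Am v = Am m then coeff v f else 0) = 0 := by
          have h0 : coeff (Am m) (theta f) = 0 := by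
            rw [RingHom.mem_ker] at hker; rw [hker]; simp
          rw [hth] at h0
          rw [MvPolynomial.coeff_sum] at h0
          have hrw : ∑ v ∈ f.support, (if Am v = Am m then coeff v f else 0)
              = ∑ x ∈ f.support, coeff (Am m) ((monomial (Am x)) (coeff x f)) :=
            Finset.sum_congr rfl fun v _ => (coeff_monomial _ _ _).symm
          rw [hrw, h0]
        have hsplit : ∑ v ∈ f.support.erase m, (if Am v = Am m then coeff v f else 0)
            = - coeff m f := by
          have h2 : coeff m f + ∑ v ∈ f.support.erase m,
              (if Am v = Am m then coeff v f else 0) = ∑ v ∈ f.support,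
              (if Am v = Am m then coeff v f else 0) := by
            simpa using Finset.add_sum_erase f.support
              (fun v => if Am v = Am m then coeff v f else 0) hm
          linear_combination h2 + hco
        have hne : ∑ v ∈ f.support.erase m, (if Am v = Am m then coeff v f else 0) ≠ 0 := by
          rw [hsplit]
          simp only [ne_eq, neg_eq_zero]
          exact mem_support_iff.mp hm
        obtain ⟨v, hv, hvne⟩ := Finset.exists_ne_zero_of_sum_ne_zero hne
        have hvm : v ≠ m := (Finset.mem_erase.mp hv).1
        have hvs : v ∈ f.support := (Finset.mem_erase.mp hv).2
        have hAm : Am v = Am m := by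
          by_contra hA; rw [if_neg hA] at hvne; exact hvne rfl
        have hc : coeff v f ≠ 0 := by rwa [if_pos hAm] at hvne
        set c := coeff v f with hcdef
        set b : Rp := monomial v (1:ℂ) - monomial m 1 with hbdef
        have hbI : b ∈ Isp := binomial_mem hAm
        have hbker : b ∈ RingHom.ker theta := by
          rw [RingHom.mem_ker, hbdef, map_sub, theta_monomial, theta_monomial, hAm, sub_self]
        set g : Rp := f - C c * b with hgdef
        have hgker : g ∈ RingHom.ker theta := by
          rw [RingHom.mem_ker] at hker ⊢
          rw [hgdef, map_sub, map_mul, hker]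
          rw [RingHom.mem_ker] at hbker
          rw [hbker, mul_zero, sub_zero]
        have hsupp : g.support ⊆ f.support.erase v := by
          intro u hu
          have hcu : coeff u g ≠ 0 := mem_support_iff.mp hu
          rw [Finset.mem_erase]
          constructor
          · intro huv
            apply hcu
            rw [hgdef, coeff_sub, huv, hbdef, mul_sub, coeff_sub, C_mul_monomial,
              C_mul_monomial, mul_one, coeff_monomial, coeff_monomial, if_pos rfl,
              if_neg (Ne.symm hvm)]
            simp [hcdef]
          · rw [mem_support_iff]
            intro hfu
            apply hcu
            rw [hgdef, coeff_sub, hfu, hbdef, mul_sub, coeff_sub, C_mul_monomial,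
              C_mul_monomial, mul_one, coeff_monomial, coeff_monomial]
            by_cases h1 : v = u
            · exact absurd (show coeff v f = 0 by rw [h1]; exact hfu) hc
            · rw [if_neg h1]
              by_cases h2 : m = u
              · exact absurd (show coeff m f = 0 by rw [h2]; exact hfu) (mem_support_iff.mp hm)
              · rw [if_neg h2]; ring
        have hcard2 : g.support.card ≤ n := by
          calc g.support.card ≤ (f.support.erase v).card := Finset.card_le_card hsupp
            _ = f.support.card - 1 := Finset.card_erase_of_mem hvs
            _ ≤ n := by omega
        have hgI : g ∈ Isp := ih g hcard2 hgker
        have : f = g + C c * b := by rw [hgdef]; ring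
        rw [this]
        exact Isp.add_mem hgI (Ideal.mul_mem_left _ _ hbI)


/-- The kernel of θ (the homogeneous ideal of the Bayle–Sano Enriques–Fano threefold
W_{BS}¹³ ⊂ ℙ¹³ of genus 13) is generated by its homogeneous elements of degree 2. -/
theorem ideal_of_WBS13_generated_by_quadrics :
    RingHom.ker theta =
      Ideal.span {f : MvPolynomial (Fin 14) ℂ |
        f ∈ RingHom.ker theta ∧ f.IsHomogeneous 2} := by
  apply le_antisymm
  · intro f hf
    exact ker_sub f.support.card f le_rfl hf
  · rw [Ideal.span_le]
    intro f hf
    exact hf.1
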